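/- arXiv:2306.17740 — 2 statements merged into one kernel-verified Lean document; each statement's English description precedes it below -/
import Mathlib

section
/- Conservation of angular momentum about the gravity axis: under the hypotheses of the angular momentum balance for point masses coupled by hyperelastic elements, assume additionally that the external force on each mass is constant gravity, fext k t = m k • b for a fixed vector b : Fin 3 → ℝ. Then the component of the total angular momentum along b is conserved: the function t ↦ ⟪∑ k, (q k t) ×₃ (m k • v k t), b⟫ is constant in t. -/
/-!
Since `qₖ' = vₖ` and `vₖ ⨯₃ vₖ = 0`, the derivative of the angular momentum is the total torque
`∑ₖ qₖ ⨯₃ (mₖ • vₖ')`. Element `i` pushes mass `k` along its own vector `rᵢ = ∑ⱼ aᵢⱼ • qⱼ` with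
weight `aᵢₖ`, so with `cᵢ = Sᵢ / lᵢ²` the element torques add up to `∑ᵢ cᵢ • rᵢ ⨯₃ rᵢ = 0`.
What remains is the gravity torque `(∑ₖ mₖ • qₖ) ⨯₃ b`, which is orthogonal to `b`.
-/

open Matrix

section Calculus

variable {𝕜 : Type*} [NontriviallyNormedField 𝕜] [CompleteSpace 𝕜] {t : 𝕜}

theorem HasDerivAt.cross {u w : 𝕜 → Fin 3 → 𝕜} {u' w' : Fin 3 → 𝕜}
    (hu : HasDerivAt u u' t) (hw : HasDerivAt w w' t) :
    HasDerivAt (fun s => u s ⨯₃ w s) (u t ⨯₃ w' + u' ⨯₃ w t) t :=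
  (crossProduct (R := 𝕜)).toContinuousBilinearMap.hasDerivAt_of_bilinear (fun _ => hu) fun _ => hw

theorem HasDerivAt.dotProduct {ι : Type*} [Fintype ι] {u w : 𝕜 → ι → 𝕜} {u' w' : ι → 𝕜}
    (hu : HasDerivAt u u' t) (hw : HasDerivAt w w' t) :
    HasDerivAt (fun s => u s ⬝ᵥ w s) (u t ⬝ᵥ w' + u' ⬝ᵥ w t) t :=
  (dotProductBilin 𝕜 𝕜 : (ι → 𝕜) →ₗ[𝕜] (ι → 𝕜) →ₗ[𝕜] 𝕜).toContinuousBilinearMap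
    |>.hasDerivAt_of_bilinear (fun _ => hu) fun _ => hw

theorem hasDerivAt_sum_cross_smul {ι : Type*} [Fintype ι] (m : ι → 𝕜)
    {q v : ι → 𝕜 → Fin 3 → 𝕜} {v' : ι → Fin 3 → 𝕜}
    (hq : ∀ k, HasDerivAt (q k) (v k t) t) (hv : ∀ k, HasDerivAt (v k) (v' k) t) :
    HasDerivAt (fun s => ∑ k, q k s ⨯₃ (m k • v k s)) (∑ k, q k t ⨯₃ (m k • v' k)) t := by
  refine HasDerivAt.fun_sum fun k _ => ((hq k).cross ((hv k).const_smul (m k))).congr_deriv ?_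
  simp only [Pi.smul_apply, map_smul, cross_self, smul_zero, add_zero]

end Calculus

section Torque

variable {R ι κ : Type*} [CommRing R] [Fintype ι] [Fintype κ]

theorem sum_cross_element_forces_eq_zero (c : ι → R) (a : ι → κ → R) (q : κ → Fin 3 → R) :
    ∑ k, q k ⨯₃ ∑ i, (c i * a i k) • ∑ j, a i j • q j = 0 := by
  have regroup (r : ι → Fin 3 → R) :
      ∑ k, q k ⨯₃ ∑ i, (c i * a i k) • r i = ∑ i, c i • (∑ k, a i k • q k) ⨯₃ r i := by
    simp only [map_sum, map_smul, LinearMap.sum_apply, LinearMap.smul_apply, Finset.smul_sum,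
      smul_smul]
    rw [Finset.sum_comm]
  simp only [regroup, cross_self, smul_zero, Finset.sum_const_zero]

theorem sum_cross_gravity_sub_element_forces (m : κ → R) (b : Fin 3 → R) (c : ι → R)
    (a : ι → κ → R) (q : κ → Fin 3 → R) :
    ∑ k, q k ⨯₃ (m k • b - ∑ i, (c i * a i k) • ∑ j, a i j • q j) = (∑ k, m k • q k) ⨯₃ b := by
  simp only [map_sub, Finset.sum_sub_distrib]
  rw [sum_cross_element_forces_eq_zero, sub_zero, map_sum, LinearMap.sum_apply]
  simp only [map_smul, LinearMap.smul_apply]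

end Torque

theorem angular_momentum_conservation_gravity_general (N nel : ℕ)
    (m : Fin N → ℝ) (a : Fin nel → Fin N → ℝ)
    (l : Fin nel → ℝ)
    (S : ℝ → (Fin nel → ℝ)) (b : Fin 3 → ℝ)
    (q v : Fin N → ℝ → (Fin 3 → ℝ))
    (hq : ∀ k, Differentiable ℝ (q k)) (hv : ∀ k, Differentiable ℝ (v k))
    (hqv : ∀ (k : Fin N) (t : ℝ), deriv (q k) t = v k t)
    (hdyn : ∀ (k : Fin N) (t : ℝ), m k • deriv (v k) t
      = m k • b - ∑ i, (S t i * a i k / (l i) ^ 2) • (∑ j, a i j • q j t)) :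
    ∀ t : ℝ, (∑ k, q k t ⨯₃ (m k • v k t)) ⬝ᵥ b
      = (∑ k, q k 0 ⨯₃ (m k • v k 0)) ⬝ᵥ b := by
  have torque (t : ℝ) : ∑ k, q k t ⨯₃ (m k • deriv (v k) t) = (∑ k, m k • q k t) ⨯₃ b := by
    simp only [hdyn, mul_div_right_comm, sum_cross_gravity_sub_element_forces]
  have hL (t : ℝ) : HasDerivAt (fun s => (∑ k, q k s ⨯₃ (m k • v k s)) ⬝ᵥ b) 0 t := by
    have hq' k : HasDerivAt (q k) (v k t) t := hqv k t ▸ (hq k t).hasDerivAt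
    refine ((hasDerivAt_sum_cross_smul m hq' fun k => (hv k t).hasDerivAt).dotProduct
      (hasDerivAt_const t b)).congr_deriv ?_
    rw [torque, dotProduct_zero, zero_add, dotProduct_comm, dot_cross_self]
  exact fun t =>
    is_const_of_deriv_eq_zero (fun s => (hL s).differentiableAt) (fun s => (hL s).deriv) t 0

/-- Conservation of angular momentum about the gravity axis:
under the hypotheses of the angular momentum balance with constant gravity
`fext k t = m k • b`, the component `⟪L(t), b⟫` of the total angular momentum
`L(t) = ∑ₖ qₖ ×₃ (mₖ • vₖ)` along `b` is constant in time. -/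
theorem angular_momentum_conservation_gravity (N nel : ℕ)
    (m : Fin N → ℝ) (a : Fin nel → Fin N → ℝ)
    (l : Fin nel → ℝ) (hl : ∀ i, l i ≠ 0)
    (S : ℝ → (Fin nel → ℝ)) (b : Fin 3 → ℝ)
    (q v : Fin N → ℝ → (Fin 3 → ℝ))
    (hq : ∀ k, Differentiable ℝ (q k)) (hv : ∀ k, Differentiable ℝ (v k))
    (hqv : ∀ (k : Fin N) (t : ℝ), deriv (q k) t = v k t)
    (hdyn : ∀ (k : Fin N) (t : ℝ), m k • deriv (v k) t
      = m k • b - ∑ i, (S t i * a i k / (l i) ^ 2) • (∑ j, a i j • q j t)) :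
    ∀ t : ℝ, (∑ k, q k t ⨯₃ (m k • v k t)) ⬝ᵥ b
      = (∑ k, q k 0 ⨯₃ (m k • v k 0)) ⬝ᵥ b :=
  angular_momentum_conservation_gravity_general N nel m a l S b q v hq hv hqv hdyn
end

section
/- The elastic forces produce no net torque in the discrete angular momentum increment: let h : ℝ, masses m : Fin N → ℝ, coefficients a : Fin nel → Fin N → ℝ, lengths l : Fin nel → ℝ with l i ≠ 0, discrete stresses S̄ : Fin nel → ℝ, external discrete gradients w : Fin N → (Fin 3 → ℝ), and states q⁰ q¹ v⁰ v¹ : Fin N → (Fin 3 → ℝ) satisfying, for each k: q¹ k - q⁰ k = h • ((v⁰ k + v¹ k)/2) and m k • (v¹ k - v⁰ k) = -h • (w k + ∑ i, (S̄ i * a i k/(l i)²) • (∑ j, a i j • ((q⁰ j + q¹ j)/2))). Then the increment of the discrete total angular momentum L = ∑ k, q k ×₃ (m k • v k) satisfies (∑ k, q¹ k ×₃ (m k • v¹ k)) - (∑ k, q⁰ k ×₃ (m k • v⁰ k)) = -h • ∑ k, ((q⁰ k + q¹ k)/2) ×₃ (w k): only the external forces contribute. -/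
/-!
For a bilinear product, `q₁ × p₁ - q₀ × p₀ = q̄ × (p₁ - p₀) + (q₁ - q₀) × p̄` with bars denoting
midpoints. In the midpoint scheme `q₁ - q₀` is parallel to `p̄ = m v̄`, so the second term
vanishes and the increment of angular momentum is `∑ₖ q̄ₖ × (force on k)`. The elastic force of
element `i` on mass `k` is `cᵢ aᵢₖ yᵢ` with `yᵢ = ∑ⱼ aᵢⱼ q̄ⱼ`, so summing over `k` first turns
its torque into `∑ᵢ cᵢ yᵢ × yᵢ = 0`.
-/

open Matrix

section CrossProduct

variable {R : Type*}

lemma cross_sum {ι : Type*} [CommRing R] (s : Finset ι) (u : Fin 3 → R) (f : ι → Fin 3 → R) :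
    u ⨯₃ ∑ i ∈ s, f i = ∑ i ∈ s, u ⨯₃ f i :=
  map_sum (crossProduct u) f s

lemma sum_smul_cross {ι : Type*} [CommRing R] (s : Finset ι) (c : ι → R) (f : ι → Fin 3 → R)
    (v : Fin 3 → R) : (∑ i ∈ s, c i • f i) ⨯₃ v = ∑ i ∈ s, c i • (f i ⨯₃ v) := by
  simp only [LinearMap.map_sum₂, LinearMap.map_smul₂]

lemma cross_sub_cross_eq_midpoint [Field R] [CharZero R] (q₀ q₁ p₀ p₁ : Fin 3 → R) :
    q₁ ⨯₃ p₁ - q₀ ⨯₃ p₀ = ((q₀ + q₁) / 2) ⨯₃ (p₁ - p₀) + (q₁ - q₀) ⨯₃ ((p₀ + p₁) / 2) := by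
  ext j
  fin_cases j <;> simp [cross_apply] <;> ring

lemma cross_smul_sub_cross_smul_eq_midpoint_cross [Field R] [CharZero R]
    {q₀ q₁ v₀ v₁ : Fin 3 → R} {h : R} (hq : q₁ - q₀ = h • ((v₀ + v₁) / 2)) (c : R) :
    q₁ ⨯₃ (c • v₁) - q₀ ⨯₃ (c • v₀) = ((q₀ + q₁) / 2) ⨯₃ (c • (v₁ - v₀)) := by
  have hp : (c • v₀ + c • v₁) / 2 = c • ((v₀ + v₁) / 2) := by rw [← smul_add, smul_div_assoc]
  rw [cross_sub_cross_eq_midpoint, hq, hp, smul_sub, LinearMap.map_smul₂, map_smul, cross_self,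
    smul_zero, smul_zero, add_zero]

lemma sum_cross_sum_mul_smul {ι κ : Type*} [Fintype ι] [Fintype κ] [CommRing R]
    (c : ι → R) (a : ι → κ → R) (x : κ → Fin 3 → R) (y : ι → Fin 3 → R) :
    ∑ k, x k ⨯₃ ∑ i, (c i * a i k) • y i = ∑ i, c i • ((∑ k, a i k • x k) ⨯₃ y i) := by
  simp only [cross_sum, map_smul, sum_smul_cross, Finset.smul_sum, mul_smul]
  exact Finset.sum_comm

lemma sum_cross_sum_mul_smul_sum_eq_zero {ι κ : Type*} [Fintype ι] [Fintype κ] [CommRing R]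
    (c : ι → R) (a : ι → κ → R) (x : κ → Fin 3 → R) :
    ∑ k, x k ⨯₃ ∑ i, (c i * a i k) • ∑ j, a i j • x j = 0 := by
  simp only [sum_cross_sum_mul_smul, cross_self, smul_zero, Finset.sum_const_zero]

end CrossProduct

theorem discrete_angular_momentum_increment_general (N nel : ℕ) (h : ℝ)
    (m : Fin N → ℝ) (a : Fin nel → Fin N → ℝ)
    (l : Fin nel → ℝ)
    (Sbar : Fin nel → ℝ) (w : Fin N → (Fin 3 → ℝ))
    (q0 q1 v0 v1 : Fin N → (Fin 3 → ℝ))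
    (hq : ∀ k : Fin N, q1 k - q0 k = h • ((v0 k + v1 k) / 2))
    (hv : ∀ k : Fin N, m k • (v1 k - v0 k)
      = -h • (w k + ∑ i, (Sbar i * a i k / (l i) ^ 2)
          • (∑ j, a i j • ((q0 j + q1 j) / 2)))) :
    (∑ k, q1 k ⨯₃ (m k • v1 k)) - (∑ k, q0 k ⨯₃ (m k • v0 k))
      = -h • ∑ k, ((q0 k + q1 k) / 2) ⨯₃ w k := by
  calc (∑ k, q1 k ⨯₃ (m k • v1 k)) - (∑ k, q0 k ⨯₃ (m k • v0 k))
      = ∑ k, ((q0 k + q1 k) / 2) ⨯₃ (m k • (v1 k - v0 k)) := by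
        rw [← Finset.sum_sub_distrib]
        exact Finset.sum_congr rfl fun k _ ↦
          cross_smul_sub_cross_smul_eq_midpoint_cross (hq k) (m k)
    _ = -h • ∑ k, ((q0 k + q1 k) / 2) ⨯₃ w k
        + -h • ∑ k, ((q0 k + q1 k) / 2) ⨯₃
            ∑ i, (Sbar i / l i ^ 2 * a i k) • ∑ j, a i j • ((q0 j + q1 j) / 2) := by
        simp only [hv, map_smul, map_add, smul_add, Finset.sum_add_distrib, ← Finset.smul_sum,
          mul_div_right_comm]
    _ = -h • ∑ k, ((q0 k + q1 k) / 2) ⨯₃ w k := by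
        rw [sum_cross_sum_mul_smul_sum_eq_zero, smul_zero, add_zero]

/-- The elastic forces produce no net torque in the discrete
angular momentum increment: for the midpoint discrete-gradient scheme
`q¹ₖ - q⁰ₖ = h • (v⁰ₖ + v¹ₖ)/2`,
`mₖ • (v¹ₖ - v⁰ₖ) = -h • (wₖ + ∑ᵢ (S̄ᵢ aᵢₖ/lᵢ²) • ∑ⱼ aᵢⱼ • (q⁰ⱼ + q¹ⱼ)/2)`,
the increment of the discrete total angular momentum `L = ∑ₖ qₖ ×₃ (mₖ • vₖ)`
equals `-h • ∑ₖ ((q⁰ₖ + q¹ₖ)/2) ×₃ wₖ`: only the external forces contribute. -/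
theorem discrete_angular_momentum_increment (N nel : ℕ) (h : ℝ)
    (m : Fin N → ℝ) (a : Fin nel → Fin N → ℝ)
    (l : Fin nel → ℝ) (hl : ∀ i, l i ≠ 0)
    (Sbar : Fin nel → ℝ) (w : Fin N → (Fin 3 → ℝ))
    (q0 q1 v0 v1 : Fin N → (Fin 3 → ℝ))
    (hq : ∀ k : Fin N, q1 k - q0 k = h • ((v0 k + v1 k) / 2))
    (hv : ∀ k : Fin N, m k • (v1 k - v0 k)
      = -h • (w k + ∑ i, (Sbar i * a i k / (l i) ^ 2)
          • (∑ j, a i j • ((q0 j + q1 j) / 2)))) :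
    (∑ k, q1 k ⨯₃ (m k • v1 k)) - (∑ k, q0 k ⨯₃ (m k • v0 k))
      = -h • ∑ k, ((q0 k + q1 k) / 2) ⨯₃ w k :=
  discrete_angular_momentum_increment_general N nel h m a l Sbar w q0 q1 v0 v1 hq hv
end
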